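/- Regret additivity for pruning: if observation sequences o_1,...,o_n are pruned and the regret of pruning o_j is at most P(o_j)·Λ (probability of the sequence times the maximal value range over it), and Σ_j P(o_j)·Λ ≤ φ, then the value of the policy found while ignoring these sequences is within φ of the value of the ε-locally optimal policy over the full neighborhood. -/

import Mathlib

section WeightedSum

variable {ι R : Type*} [Fintype ι] [Ring R]

theorem sum_mul_sub_sum_mul_eq_of_eq_off (w f g : ι → R) (s : Finset ι)
    (hfg : ∀ i ∉ s, f i = g i) :
    ∑ i, w i * f i - ∑ i, w i * g i = ∑ i ∈ s, w i * (f i - g i) := by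
  rw [← Finset.sum_sub_distrib]
  refine (Finset.sum_subset (Finset.subset_univ s) fun i _ hi => ?_).symm.trans ?_
  · rw [hfg i hi, sub_self]
  · simp only [mul_sub]

theorem sum_mul_sub_sum_mul_le_of_eq_off [PartialOrder R] [IsOrderedRing R]
    (w f g : ι → R) (Λ : R) (s : Finset ι)
    (hw : ∀ i ∈ s, 0 ≤ w i) (hrange : ∀ i ∈ s, f i - g i ≤ Λ)
    (hfg : ∀ i ∉ s, f i = g i) :
    ∑ i, w i * f i - ∑ i, w i * g i ≤ ∑ i ∈ s, w i * Λ := by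
  rw [sum_mul_sub_sum_mul_eq_of_eq_off w f g s hfg]
  exact Finset.sum_le_sum fun i hi => mul_le_mul_of_nonneg_left (hrange i hi) (hw i hi)

end WeightedSum

theorem stmt13_general {Pol : Type*} {O : Type*} [Fintype O]
    (P : O → ℝ) (hP0 : ∀ o, 0 ≤ P o)
    (Λ φ : ℝ)
    (Vc : Pol → O → ℝ) (V : Pol → ℝ)
    (hV : ∀ π, V π = ∑ o, P o * Vc π o)
    (hrange : ∀ π π' o, Vc π o - Vc π' o ≤ Λ)
    (pruned : Finset O)
    (hregret : (∑ o ∈ pruned, P o * Λ) ≤ φ)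
    (π πstar : Pol)
    (hagree : ∀ o ∉ pruned, Vc πstar o = Vc π o) :
    V πstar - V π ≤ (∑ o ∈ pruned, P o * Λ) ∧ V πstar - V π ≤ φ := by
  have hregret_le : V πstar - V π ≤ ∑ o ∈ pruned, P o * Λ := by
    rw [hV, hV]
    exact sum_mul_sub_sum_mul_le_of_eq_off P (Vc πstar) (Vc π) Λ pruned
      (fun o _ => hP0 o) (fun o _ => hrange πstar π o) hagree
  exact ⟨hregret_le, hregret_le.trans hregret⟩

/-- Regret additivity for pruning. The value of a policy decomposes as
`V(π) = Σ_o P(o)·Vc(π,o)` over disjoint observation-sequence events `o`; conditional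
values have range at most `Λ`. If `π*` differs from `π` only on the pruned sequences,
and the total pruning regret satisfies `Σ_{o ∈ 𝒫} P(o)·Λ ≤ φ`, then
`V(π*) − V(π) ≤ Σ_{o ∈ 𝒫} P(o)·Λ ≤ φ`. -/
theorem stmt13 {Pol : Type*} {O : Type*} [Fintype O]
    (P : O → ℝ) (hP0 : ∀ o, 0 ≤ P o) (hP1 : (∑ o, P o) ≤ 1)
    (Λ φ : ℝ) (hΛ : 0 ≤ Λ) (hφ : 0 < φ)
    (Vc : Pol → O → ℝ) (V : Pol → ℝ)
    (hV : ∀ π, V π = ∑ o, P o * Vc π o)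
    (hrange : ∀ π π' o, Vc π o - Vc π' o ≤ Λ)
    (pruned : Finset O)
    (hregret : (∑ o ∈ pruned, P o * Λ) ≤ φ)
    (π πstar : Pol)
    (hagree : ∀ o ∉ pruned, Vc πstar o = Vc π o) :
    V πstar - V π ≤ (∑ o ∈ pruned, P o * Λ) ∧ V πstar - V π ≤ φ :=
  stmt13_general P hP0 Λ φ Vc V hV hrange pruned hregret π πstar hagree
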